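/- Suppose ‖g̃_t‖ ≤ L for all t and η_i = σ/√i is decreasing, and suppose every index i in R_t ∪ Q_t satisfies i ≥ max(1, t − (s_g + s_l)N) and |R_t| + |Q_t| ≤ (2s_g + s_l)(N − 1). Then ∑_{t=1}^T (∑_{i∈R_t} η_i⟨g̃_i,g̃_t⟩ − ∑_{i∈Q_t} η_i⟨g̃_i,g̃_t⟩) ≤ σL²(2s_g + s_l)(s_g + s_l)N² + 2σL²(2s_g + s_l)N√T. -/

import Mathlib

/-!
Every stale index `i` for step `t` is at least `m_t = max 1 (t - (s_g + s_l) N)`, so by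
Cauchy–Schwarz each stale term is at most `σ L² / √m_t` in absolute value, and there are at most
`(2 s_g + s_l) N` of them. Summing over `t`, the first `(s_g + s_l) N` steps contribute at most `1`
each to `∑ₜ 1 / √m_t`, and the remaining ones form a tail of `∑ₖ 1 / √k ≤ 2 √T`.
-/

open Finset Real

lemma one_div_sqrt_add_one_le (x : ℝ) (hx : 0 ≤ x) :
    1 / √(x + 1) ≤ 2 * (√(x + 1) - √x) := by
  have hpos : 0 < √(x + 1) := sqrt_pos.2 (by linarith)
  have hsq : √(x + 1) ^ 2 = x + 1 := sq_sqrt (by linarith)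
  have hsq' : √x ^ 2 = x := sq_sqrt hx
  rw [div_le_iff₀ hpos]
  nlinarith [sq_nonneg (√(x + 1) - √x)]

lemma sum_Icc_one_div_sqrt_max_sub_le (c T : ℕ) :
    ∑ t ∈ Icc 1 T, 1 / √((max 1 (t - c) : ℕ)) ≤ min T c + 2 * √((T - c : ℕ)) := by
  induction T with
  | zero => simp
  | succ T ih =>
    rw [sum_Icc_succ_top (Nat.le_add_left 1 T)]
    rcases le_or_gt (T + 1) c with hTc | hcT
    · have hmax : max 1 (T + 1 - c) = 1 := by omega
      have hmin : min (T + 1) c = min T c + 1 := by omega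
      rw [Nat.sub_eq_zero_of_le (by omega : T ≤ c)] at ih
      rw [hmax, hmin, Nat.sub_eq_zero_of_le hTc]
      push_cast at ih ⊢
      linarith
    · have hmax : max 1 (T + 1 - c) = (T - c) + 1 := by omega
      rw [hmax, Nat.sub_add_comm (by omega : c ≤ T), min_eq_right (by omega : c ≤ T + 1)]
      rw [min_eq_right (by omega : c ≤ T)] at ih
      have hstep := one_div_sqrt_add_one_le (T - c : ℕ) (Nat.cast_nonneg _)
      rw [← Nat.cast_add_one] at hstep
      linarith

lemma sum_Icc_one_div_sqrt_max_sub_le_add (c T : ℕ) :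
    ∑ t ∈ Icc 1 T, 1 / √((max 1 (t - c) : ℕ)) ≤ c + 2 * √T := by
  refine (sum_Icc_one_div_sqrt_max_sub_le c T).trans (add_le_add ?_ ?_)
  · exact_mod_cast min_le_right T c
  · gcongr
    exact_mod_cast Nat.sub_le T c

lemma sum_sub_sum_le_of_abs_le {ι : Type*} [DecidableEq ι] {s u : Finset ι} {f : ι → ℝ} {B : ℝ}
    (hf : ∀ i ∈ s ∪ u, |f i| ≤ B) :
    ∑ i ∈ s, f i - ∑ i ∈ u, f i ≤ (#s + #u) * B := by
  have hs : ∑ i ∈ s, f i ≤ #s * B := by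
    simpa using sum_le_card_nsmul s f B fun i hi ↦
      (le_abs_self _).trans (hf i (mem_union_left _ hi))
  have hu : ∑ i ∈ u, -f i ≤ #u * B := by
    simpa using sum_le_card_nsmul u (fun i ↦ -f i) B fun i hi ↦
      (neg_le_abs _).trans (hf i (mem_union_right _ hi))
  rw [sum_neg_distrib] at hu
  linarith

section StepSize

variable {E : Type*} [NormedAddCommGroup E] [InnerProductSpace ℝ E]

lemma abs_div_sqrt_mul_inner_le {g : ℕ → E} {L σ : ℝ} (hg : ∀ t, ‖g t‖ ≤ L) (hσ : 0 ≤ σ)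
    {m i : ℕ} (hm : 1 ≤ m) (hmi : m ≤ i) (t : ℕ) :
    |σ / √i * inner ℝ (g i) (g t)| ≤ σ * L ^ 2 / √m := by
  have hsqrt_m : 0 < √(m : ℝ) := sqrt_pos.2 (by exact_mod_cast hm)
  have hstep : σ / √i ≤ σ / √m :=
    div_le_div_of_nonneg_left hσ hsqrt_m (sqrt_le_sqrt (by exact_mod_cast hmi))
  have hinner : |inner ℝ (g i) (g t)| ≤ L ^ 2 :=
    calc |inner ℝ (g i) (g t)| ≤ ‖g i‖ * ‖g t‖ := abs_real_inner_le_norm _ _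
      _ ≤ L ^ 2 := by nlinarith [hg i, hg t, norm_nonneg (g i), norm_nonneg (g t)]
  rw [abs_mul, abs_of_nonneg (by positivity), mul_div_right_comm]
  exact mul_le_mul hstep hinner (abs_nonneg _) (by positivity)

lemma stale_sum_sub_le {g : ℕ → E} {L σ : ℝ} (hg : ∀ t, ‖g t‖ ≤ L) (hσ : 0 ≤ σ)
    {R Q : Finset ℕ} {m : ℕ} (hm : 1 ≤ m) (hidx : ∀ i ∈ R ∪ Q, m ≤ i) (t : ℕ) :
    ∑ i ∈ R, σ / √i * inner ℝ (g i) (g t) - ∑ i ∈ Q, σ / √i * inner ℝ (g i) (g t) ≤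
      (#R + #Q) * (σ * L ^ 2 / √m) :=
  sum_sub_sum_le_of_abs_le fun i hi ↦ abs_div_sqrt_mul_inner_le hg hσ hm (hidx i hi) t

end StepSize

theorem stale_terms_sum_bound_general (n : ℕ) (g : ℕ → EuclideanSpace ℝ (Fin n))
    (L σ : ℝ) (hσ : 0 < σ)
    (sg sl N T : ℕ)
    (R Q : ℕ → Finset ℕ)
    (hg : ∀ t, ‖g t‖ ≤ L)
    (hidx : ∀ t, ∀ i ∈ R t ∪ Q t, max 1 (t - (sg + sl) * N) ≤ i)
    (hcard : ∀ t, (R t).card + (Q t).card ≤ (2 * sg + sl) * (N - 1)) :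
    ∑ t ∈ Finset.Icc 1 T,
        (∑ i ∈ R t, (σ / Real.sqrt i) * (inner ℝ (g i) (g t) : ℝ) -
          ∑ i ∈ Q t, (σ / Real.sqrt i) * (inner ℝ (g i) (g t) : ℝ)) ≤
      σ * L ^ 2 * (2 * (sg : ℝ) + sl) * ((sg : ℝ) + sl) * (N : ℝ) ^ 2 +
        2 * σ * L ^ 2 * (2 * (sg : ℝ) + sl) * (N : ℝ) * Real.sqrt T := by
  set c := (sg + sl) * N
  set K : ℝ := (2 * sg + sl) * N
  have hcard_le : ∀ t, ((#(R t) + #(Q t) : ℕ) : ℝ) ≤ K := fun t ↦ by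
    have : (2 * sg + sl) * (N - 1) ≤ (2 * sg + sl) * N := Nat.mul_le_mul_left _ (Nat.sub_le N 1)
    simp only [K]
    exact_mod_cast (hcard t).trans this
  calc _ ≤ ∑ t ∈ Icc 1 T, K * (σ * L ^ 2) * (1 / √((max 1 (t - c) : ℕ))) := by
        refine sum_le_sum fun t _ ↦
          (stale_sum_sub_le hg hσ.le (le_max_left _ _) (hidx t) t).trans ?_
        rw [mul_one_div, ← mul_div_assoc]
        gcongr
        exact_mod_cast hcard_le t
    _ = K * (σ * L ^ 2) * ∑ t ∈ Icc 1 T, 1 / √((max 1 (t - c) : ℕ)) := (mul_sum ..).symm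
    _ ≤ K * (σ * L ^ 2) * (c + 2 * √T) := by
        gcongr
        exact sum_Icc_one_div_sqrt_max_sub_le_add c T
    _ = _ := by simp only [K, c]; push_cast; ring

theorem stale_terms_sum_bound (n : ℕ) (g : ℕ → EuclideanSpace ℝ (Fin n))
    (L σ : ℝ) (hL : 0 < L) (hσ : 0 < σ)
    (sg sl N T : ℕ) (hN : 1 ≤ N)
    (R Q : ℕ → Finset ℕ)
    (hg : ∀ t, ‖g t‖ ≤ L)
    (hidx : ∀ t, ∀ i ∈ R t ∪ Q t, max 1 (t - (sg + sl) * N) ≤ i)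
    (hcard : ∀ t, (R t).card + (Q t).card ≤ (2 * sg + sl) * (N - 1)) :
    ∑ t ∈ Finset.Icc 1 T,
        (∑ i ∈ R t, (σ / Real.sqrt i) * (inner ℝ (g i) (g t) : ℝ) -
          ∑ i ∈ Q t, (σ / Real.sqrt i) * (inner ℝ (g i) (g t) : ℝ)) ≤
      σ * L ^ 2 * (2 * (sg : ℝ) + sl) * ((sg : ℝ) + sl) * (N : ℝ) ^ 2 +
        2 * σ * L ^ 2 * (2 * (sg : ℝ) + sl) * (N : ℝ) * Real.sqrt T :=
  stale_terms_sum_bound_general n g L σ hσ sg sl N T R Q hg hidx hcard
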